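/- Duality for the linear marginal penalty: for any bounded measurable A₁ : X → ℝ, probability measure ν, and α > 0, sup over finite nonnegative measures P ≪ ν of [∫ A₁ dP − α ∫ Ψ(dP/dν) dν] = α ∫ Ψ*(A₁/α) dν, where Ψ is convex lower semi-continuous and superlinear, and Ψ* its convex conjugate. -/

import Mathlib

/-!
Pointwise, `A x * s - α * Ψ s ≤ α * Ψ*(A x / α)` is the Fenchel–Young inequality, which gives the
upper bound after integration. For the reverse inequality one needs a measurable `ε`-optimal
density. The conjugate `Ψ*` is a real-valued convex function, hence continuous, so the sets
`{y | Ψ* y - ε < s * y - Ψ s}` are open and cover `ℝ`; by Lindelöf countably many of them do, and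
choosing the first index whose set contains `A x / α` gives a measurable density with countably
many values. Its integrand lies within `ε` of the bounded function `α * Ψ*(A / α)`, so it is
integrable and its integral is within `ε` of the claimed value.
-/

open MeasureTheory Set
open scoped ENNReal

lemma exists_seq_forall_exists_lt {α ι : Type*} [TopologicalSpace α] [SecondCountableTopology α]
    [Nonempty α] {F : α → ℝ} {f : ι → α → ℝ} (hF : Continuous F) (hf : ∀ i, Continuous (f i))
    (h : ∀ y, ∃ i, F y < f i y) : ∃ i : ℕ → ι, ∀ y, ∃ n, F y < f (i n) y := by
  obtain ⟨T, hTc, hTcover⟩ := TopologicalSpace.isOpen_iUnion_countable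
    (fun i => {y | F y < f i y}) fun i => isOpen_lt hF (hf i)
  have hcover : ∀ y, ∃ i ∈ T, F y < f i y := fun y => by
    have hy : y ∈ ⋃ i ∈ T, {y | F y < f i y} := hTcover ▸ mem_iUnion.mpr (h y)
    simpa using hy
  have hT : T.Nonempty := let ⟨i, hi, _⟩ := hcover (Classical.arbitrary α); ⟨i, hi⟩
  obtain ⟨i, rfl⟩ := hTc.exists_eq_range hT
  exact ⟨i, fun y => by simpa using hcover y⟩

lemma exists_measurable_nat_forall {X : Type*} [MeasurableSpace X] {P : X → ℕ → Prop}
    (hP : ∀ n, MeasurableSet {x | P x n}) (h : ∀ x, ∃ n, P x n) :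
    ∃ N : X → ℕ, Measurable N ∧ ∀ x, P x (N x) := by
  classical
  exact ⟨fun x => Nat.find (h x), measurable_find h hP, fun x => Nat.find_spec (h x)⟩

lemma Continuous.integrable_comp_of_abs_le {X : Type*} [MeasurableSpace X] {μ : Measure X}
    [IsFiniteMeasure μ] {f : ℝ → ℝ} (hf : Continuous f) {Y : X → ℝ} (hY : Measurable Y) {C : ℝ}
    (hC : ∀ x, |Y x| ≤ C) : Integrable (fun x => f (Y x)) μ := by
  obtain ⟨B, hB⟩ := isCompact_Icc.exists_bound_of_continuousOn (hf.continuousOn (s := Icc (-C) C))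
  exact .of_bound (hf.measurable.comp hY).aestronglyMeasurable B
    (ae_of_all _ fun x => hB _ (abs_le.mp (hC x)))

lemma mul_sub_mul_eq_mul_div_sub {α : ℝ} (hα : α ≠ 0) (a s t : ℝ) :
    a * s - α * t = α * (s * (a / α) - t) := by
  field_simp

def IsConjugateOnNonneg (Ψ : ℝ → ℝ≥0∞) (Ψstar : ℝ → ℝ) : Prop :=
  ∀ y : ℝ, IsLUB {z : EReal | ∃ s : ℝ, 0 ≤ s ∧
    z = ((s * y : ℝ) : EReal) - (Ψ s : EReal)} ((Ψstar y : ℝ) : EReal)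

namespace IsConjugateOnNonneg

variable {Ψ : ℝ → ℝ≥0∞} {Ψstar : ℝ → ℝ}

lemma sub_le (h : IsConjugateOnNonneg Ψ Ψstar) {s : ℝ} (y : ℝ) (hs : 0 ≤ s) (hfin : Ψ s ≠ ⊤) :
    s * y - (Ψ s).toReal ≤ Ψstar y := by
  have := (h y).1 ⟨s, hs, rfl⟩
  rwa [← EReal.coe_ennreal_toReal hfin, ← EReal.coe_sub, EReal.coe_le_coe_iff] at this

lemma exists_lt_sub (h : IsConjugateOnNonneg Ψ Ψstar) (y : ℝ) {ε : ℝ} (hε : 0 < ε) :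
    ∃ s, 0 ≤ s ∧ Ψ s ≠ ⊤ ∧ Ψstar y - ε < s * y - (Ψ s).toReal := by
  have hlt : ((Ψstar y - ε : ℝ) : EReal) < Ψstar y := by exact_mod_cast sub_lt_self _ hε
  obtain ⟨_, ⟨s, hs, rfl⟩, hlt', -⟩ := (h y).exists_between hlt
  have hfin : Ψ s ≠ ⊤ := by
    rintro htop
    simp [htop] at hlt'
  refine ⟨s, hs, hfin, ?_⟩
  rwa [← EReal.coe_ennreal_toReal hfin, ← EReal.coe_sub, EReal.coe_lt_coe_iff] at hlt'

lemma convexOn (h : IsConjugateOnNonneg Ψ Ψstar) : ConvexOn ℝ univ Ψstar := by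
  refine ⟨convex_univ, fun y _ y' _ a b ha hb hab => le_of_forall_sub_le fun ε hε => ?_⟩
  obtain ⟨s, hs, hfin, hlt⟩ := h.exists_lt_sub (a • y + b • y') hε
  have hy := h.sub_le y hs hfin
  have hy' := h.sub_le y' hs hfin
  have hsplit : s * (a * y + b * y') - (Ψ s).toReal
      = a * (s * y - (Ψ s).toReal) + b * (s * y' - (Ψ s).toReal) := by
    linear_combination (Ψ s).toReal * hab
  simp only [smul_eq_mul] at hlt ⊢
  nlinarith [mul_le_mul_of_nonneg_left hy ha, mul_le_mul_of_nonneg_left hy' hb]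

lemma continuous (h : IsConjugateOnNonneg Ψ Ψstar) : Continuous Ψstar :=
  continuousOn_univ.mp (h.convexOn.continuousOn isOpen_univ)

/-- `Ψ` need not be measurable; `Ψ ∘ p` is, because `p` takes countably many values. -/
lemma exists_measurable_lt_sub (h : IsConjugateOnNonneg Ψ Ψstar) {X : Type*} [MeasurableSpace X]
    {Y : X → ℝ} (hY : Measurable Y) {ε : ℝ} (hε : 0 < ε) :
    ∃ p : X → ℝ, Measurable p ∧ Measurable (fun x => (Ψ (p x)).toReal) ∧ (∀ x, 0 ≤ p x) ∧
      (∀ x, Ψ (p x) ≠ ⊤) ∧ ∀ x, Ψstar (Y x) - ε < p x * Y x - (Ψ (p x)).toReal := by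
  obtain ⟨s, hs⟩ := exists_seq_forall_exists_lt (ι := {s : ℝ // 0 ≤ s ∧ Ψ s ≠ ⊤})
    (F := fun y => Ψstar y - ε) (f := fun s y => s * y - (Ψ s).toReal)
    (h.continuous.sub continuous_const) (fun _ => by fun_prop)
    fun y => let ⟨s, hs, hfin, hlt⟩ := h.exists_lt_sub y hε; ⟨⟨s, hs, hfin⟩, hlt⟩
  obtain ⟨N, hN, hNlt⟩ := exists_measurable_nat_forall
    (fun n => measurableSet_lt ((h.continuous.measurable.comp hY).sub_const ε)
      ((hY.const_mul _).sub_const _)) fun x => hs (Y x)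
  exact ⟨fun x => s (N x), (measurable_from_nat (f := fun n => (s n : ℝ))).comp hN,
    (measurable_from_nat (f := fun n => (Ψ (s n)).toReal)).comp hN,
    fun x => (s (N x)).2.1, fun x => (s (N x)).2.2, hNlt⟩

end IsConjugateOnNonneg

theorem duality_linear_marginal_penalty_general
    {X : Type*} [MeasurableSpace X]
    (ν : Measure X) [IsProbabilityMeasure ν]
    (A : X → ℝ) (hA : Measurable A) (hAb : ∃ C : ℝ, ∀ x, |A x| ≤ C)
    (α : ℝ) (hα : 0 < α)
    (Ψ : ℝ → ℝ≥0∞)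
    (Ψstar : ℝ → ℝ)
    (hconj : ∀ y : ℝ, IsLUB {z : EReal | ∃ s : ℝ, 0 ≤ s ∧
      z = ((s * y : ℝ) : EReal) - (Ψ s : EReal)} ((Ψstar y : ℝ) : EReal)) :
    IsLUB {r : ℝ | ∃ p : X → ℝ, Measurable p ∧ (∀ x, 0 ≤ p x)
        ∧ (∀ x, Ψ (p x) ≠ ⊤)
        ∧ Integrable (fun x => A x * p x - α * (Ψ (p x)).toReal) ν
        ∧ r = ∫ x, (A x * p x - α * (Ψ (p x)).toReal) ∂ν}
      (α * ∫ x, Ψstar (A x / α) ∂ν) := by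
  have h : IsConjugateOnNonneg Ψ Ψstar := hconj
  obtain ⟨C, hC⟩ := hAb
  have hY : Measurable fun x => A x / α := hA.div_const α
  have hint : Integrable (fun x => α * Ψstar (A x / α)) ν :=
    (h.continuous.integrable_comp_of_abs_le hY (C := C / α) fun x => by
      rw [abs_div, abs_of_pos hα]; gcongr; exact hC x).const_mul α
  have hupper : ∀ {s} x, 0 ≤ s → Ψ s ≠ ⊤ → A x * s - α * (Ψ s).toReal ≤ α * Ψstar (A x / α) :=
    fun x hs hfin => by
      rw [mul_sub_mul_eq_mul_div_sub hα.ne']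
      exact mul_le_mul_of_nonneg_left (h.sub_le _ hs hfin) hα.le
  refine ⟨?_, fun b hb => le_of_forall_sub_le fun ε hε => ?_⟩
  · rintro r ⟨p, -, hp0, hpfin, hpint, rfl⟩
    rw [← integral_const_mul]
    exact integral_mono hpint hint fun x => hupper x (hp0 x) (hpfin x)
  obtain ⟨p, hpm, hΨpm, hp0, hpfin, hplt⟩ := h.exists_measurable_lt_sub hY (div_pos hε hα)
  have hlower : ∀ x, α * Ψstar (A x / α) - ε ≤ A x * p x - α * (Ψ (p x)).toReal := fun x => by
    have := mul_le_mul_of_nonneg_left (hplt x).le hα.le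
    rw [mul_sub, mul_div_cancel₀ _ hα.ne'] at this
    rwa [mul_sub_mul_eq_mul_div_sub hα.ne']
  have hpint : Integrable (fun x => A x * p x - α * (Ψ (p x)).toReal) ν :=
    integrable_of_le_of_le ((hA.mul hpm).sub (hΨpm.const_mul α)).aestronglyMeasurable
      (ae_of_all _ hlower) (ae_of_all _ fun x => hupper x (hp0 x) (hpfin x))
      (hint.sub (integrable_const ε)) hint
  calc α * ∫ x, Ψstar (A x / α) ∂ν - ε = ∫ x, (α * Ψstar (A x / α) - ε) ∂ν := by
        rw [integral_sub hint (integrable_const ε), integral_const_mul, integral_const,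
          probReal_univ, one_smul]
    _ ≤ ∫ x, (A x * p x - α * (Ψ (p x)).toReal) ∂ν :=
        integral_mono (hint.sub (integrable_const ε)) hpint hlower
    _ ≤ b := hb ⟨p, hpm, hp0, hpfin, hpint, rfl⟩

/-- Duality for the linear marginal penalty: for bounded measurable
`A₁ : X → ℝ`, a probability measure `ν`, `α > 0`, and a convex, lower
semi-continuous, superlinear entropy function `Ψ : [0,∞) → [0,∞]` with convex
conjugate `Ψ*` (real-valued, by superlinearity), the supremum over nonnegative
measures `P ≪ ν` (identified with their densities `p = dP/dν ≥ 0`) of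
`∫ A₁ p dν − α ∫ Ψ(p) dν` equals `α ∫ Ψ*(A₁/α) dν`. -/
theorem duality_linear_marginal_penalty
    {X : Type*} [MeasurableSpace X]
    (ν : Measure X) [IsProbabilityMeasure ν]
    (A : X → ℝ) (hA : Measurable A) (hAb : ∃ C : ℝ, ∀ x, |A x| ≤ C)
    (α : ℝ) (hα : 0 < α)
    (Ψ : ℝ → ℝ≥0∞)
    (hΨ1 : Ψ 1 = 0)
    (hconv : ∀ x ∈ Set.Ici (0 : ℝ), ∀ y ∈ Set.Ici (0 : ℝ), ∀ a b : ℝ,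
      0 ≤ a → 0 ≤ b → a + b = 1 →
      Ψ (a * x + b * y) ≤ ENNReal.ofReal a * Ψ x + ENNReal.ofReal b * Ψ y)
    (hlsc : LowerSemicontinuousOn Ψ (Set.Ici (0 : ℝ)))
    (hsuper : Filter.Tendsto (fun x : ℝ => Ψ x / ENNReal.ofReal x)
      Filter.atTop (nhds ⊤))
    (Ψstar : ℝ → ℝ)
    (hconj : ∀ y : ℝ, IsLUB {z : EReal | ∃ s : ℝ, 0 ≤ s ∧
      z = ((s * y : ℝ) : EReal) - (Ψ s : EReal)} ((Ψstar y : ℝ) : EReal)) :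
    IsLUB {r : ℝ | ∃ p : X → ℝ, Measurable p ∧ (∀ x, 0 ≤ p x)
        ∧ (∀ x, Ψ (p x) ≠ ⊤)
        ∧ Integrable (fun x => A x * p x - α * (Ψ (p x)).toReal) ν
        ∧ r = ∫ x, (A x * p x - α * (Ψ (p x)).toReal) ∂ν}
      (α * ∫ x, Ψstar (A x / α) ∂ν) :=
  duality_linear_marginal_penalty_general ν A hA hAb α hα Ψ Ψstar hconj
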